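/- arXiv:2407.14251 — 5 statements merged into one kernel-verified Lean document; each statement's English description precedes it below -/
import Mathlib

section
/- Let E be a finite-dimensional real inner product space, let g : E → ℝ be convex and continuous, and let λ > 0. Then for every x ∈ E the function u ↦ g(u) + (λ/2)‖u − x‖² attains its infimum at a unique point prox_{g/λ}(x), and the Moreau envelope g̃^λ is differentiable on E with gradient ∇g̃^λ(x) = λ ( x − prox_{g/λ}(x) ) for every x ∈ E. -/
/-!
Write `φₓ u = g u + (λ/2)‖u - x‖²`. Adding the quadratic to the convex `g` makes `φₓ`
`λ`-strongly convex, hence coercive (so it has a minimizer `p x`, `E` being finite-dimensional)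
and strictly convex (so the minimizer is unique). For the envelope `e`, testing `φ_y` at the
competitor `p x` gives `e y ≤ e x + ⟪λ (x - p x), y - x⟫ + (λ/2)‖y - x‖²`, while the quadratic
growth `φₓ (p x) + (λ/2)‖u - p x‖² ≤ φₓ u` of a strongly convex function away from its
minimizer, taken at `u = p y`, gives `e x + ⟪λ (x - p x), y - x⟫ ≤ e y`. Being squeezed between
an affine function and a quadratic perturbation of it, `e` has gradient `λ (x - p x)` at `x`.
-/

open Set Filter Topology

section StrongConvexity

variable {E : Type*} [NormedAddCommGroup E] [InnerProductSpace ℝ E]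
  {s : Set E} {f : E → ℝ} {m : ℝ}

lemma ConvexOn.strongConvexOn_add_sq_norm_sub {g : E → ℝ} (hg : ConvexOn ℝ s g) (m : ℝ) (x : E) :
    StrongConvexOn s m fun v => g v + m / 2 * ‖v - x‖ ^ 2 := by
  rw [strongConvexOn_iff_convex]
  refine ((hg.add_const (m / 2 * ‖x‖ ^ 2)).add ((-m • innerₛₗ ℝ x).convexOn hg.1)).congr
    fun v _ => ?_
  simp only [Pi.add_apply, LinearMap.smul_apply, innerₛₗ_apply_apply, smul_eq_mul,
    norm_sub_sq_real, real_inner_comm x v]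
  ring

lemma StrongConvexOn.add_sq_norm_sub_le_of_isMinOn (hf : StrongConvexOn s m f) {q u : E}
    (hq : IsMinOn f s q) (hqs : q ∈ s) (hus : u ∈ s) :
    f q + m / 2 * ‖u - q‖ ^ 2 ≤ f u := by
  have hsegment : ∀ t ∈ Ioo (0 : ℝ) 1, (1 - t) * (m / 2 * ‖u - q‖ ^ 2) ≤ f u - f q := by
    rintro t ⟨ht0, ht1⟩
    have hconv := hf.2 hus hqs ht0.le (sub_nonneg.2 ht1.le) (add_sub_cancel t 1)
    have hmin : f q ≤ f (t • u + (1 - t) • q) :=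
      hq (hf.1 hus hqs ht0.le (sub_nonneg.2 ht1.le) (add_sub_cancel t 1))
    simp only [smul_eq_mul] at hconv
    refine le_of_mul_le_mul_left ?_ ht0
    linarith
  have hlim : Tendsto (fun t : ℝ => (1 - t) * (m / 2 * ‖u - q‖ ^ 2)) (𝓝[>] 0)
      (𝓝 ((1 - 0) * (m / 2 * ‖u - q‖ ^ 2))) :=
    (Continuous.tendsto (by fun_prop) 0).mono_left nhdsWithin_le_nhds
  rw [sub_zero, one_mul] at hlim
  have := le_of_tendsto hlim (mem_of_superset (Ioo_mem_nhdsGT one_pos) hsegment)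
  linarith

lemma StrongConvexOn.quadratic_le_of_one_le_norm (hf : StrongConvexOn univ m f) {B : ℝ}
    (hB : ∀ v ∈ Metric.closedBall (0 : E) 1, B ≤ f v) {u : E} (hu : 1 ≤ ‖u‖) :
    B * ‖u‖ - (‖u‖ - 1) * f 0 + m / 2 * (‖u‖ ^ 2 - ‖u‖) ≤ f u := by
  have hr : 0 < ‖u‖ := one_pos.trans_le hu
  have hconv := hf.2 (mem_univ u) (mem_univ 0) (inv_nonneg.2 hr.le)
    (sub_nonneg.2 (inv_le_one_of_one_le₀ hu)) (add_sub_cancel ‖u‖⁻¹ 1)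
  have hball : B ≤ f (‖u‖⁻¹ • u + (1 - ‖u‖⁻¹) • (0 : E)) := hB _ (by
    simp [norm_smul, hr.ne'])
  simp only [smul_eq_mul, sub_zero] at hconv
  have := mul_le_mul_of_nonneg_left (hball.trans hconv) hr.le
  field_simp at this
  linarith

lemma StrongConvexOn.tendsto_cocompact_atTop [ProperSpace E] (hf : StrongConvexOn univ m f)
    (hm : 0 < m) (hcont : Continuous f) : Tendsto f (cocompact E) atTop := by
  obtain ⟨B, hB⟩ := (isCompact_closedBall (0 : E) 1).bddBelow_image hcont.continuousOn
  have hquad : Tendsto (fun r : ℝ => r * (m / 2 * r + (B - f 0 - m / 2)) + f 0) atTop atTop :=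
    tendsto_atTop_add_const_right _ _ <| tendsto_id.atTop_mul_atTop₀ <|
      tendsto_atTop_add_const_right _ _ <| tendsto_id.const_mul_atTop (by positivity)
  refine tendsto_atTop_mono' _ ?_ (hquad.comp tendsto_norm_cocompact_atTop)
  filter_upwards [tendsto_norm_cocompact_atTop.eventually_ge_atTop 1] with u hu
  have := hf.quadratic_le_of_one_le_norm (fun v hv => hB ⟨v, hv, rfl⟩) hu
  simp only [Function.comp_apply]
  linarith

lemma StrongConvexOn.exists_isMinOn [ProperSpace E] (hf : StrongConvexOn univ m f)
    (hm : 0 < m) (hcont : Continuous f) : ∃ q, IsMinOn f univ q := by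
  obtain ⟨q, hq⟩ := hcont.exists_forall_le (hf.tendsto_cocompact_atTop hm hcont)
  exact ⟨q, isMinOn_univ_iff.2 hq⟩

end StrongConvexity

lemma hasGradientAt_of_abs_sub_inner_le_sq {E : Type*} [NormedAddCommGroup E]
    [InnerProductSpace ℝ E] [CompleteSpace E] {f : E → ℝ} {f' x : E} {C : ℝ}
    (h : ∀ y, |f y - f x - inner ℝ f' (y - x)| ≤ C * ‖y - x‖ ^ 2) : HasGradientAt f f' x := by
  rw [hasGradientAt_iff_isLittleO]
  refine Asymptotics.IsBigO.trans_isLittleO ?_ (Asymptotics.isLittleO_pow_sub_sub x one_lt_two)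
  refine Asymptotics.IsBigO.of_bound C (Eventually.of_forall fun y => ?_)
  simpa using h y

section MoreauEnvelope

variable {E : Type*} [NormedAddCommGroup E] {g : E → ℝ} {lam : ℝ} {x y p q : E}

noncomputable def moreauEnvelope (g : E → ℝ) (lam : ℝ) (x : E) : ℝ :=
  ⨅ u, g u + lam / 2 * ‖u - x‖ ^ 2

lemma moreauEnvelope_eq_of_isMinOn (hq : IsMinOn (fun v => g v + lam / 2 * ‖v - x‖ ^ 2) univ q) :
    moreauEnvelope g lam x = g q + lam / 2 * ‖q - x‖ ^ 2 :=
  ciInf_eq_of_forall_ge_of_forall_gt_exists_lt (fun u => hq (mem_univ u)) fun _ hw => ⟨q, hw⟩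

variable [InnerProductSpace ℝ E]

lemma moreauEnvelope_le_add_inner_add_sq
    (hq : IsMinOn (fun v => g v + lam / 2 * ‖v - x‖ ^ 2) univ q)
    (hp : IsMinOn (fun v => g v + lam / 2 * ‖v - y‖ ^ 2) univ p) :
    moreauEnvelope g lam y ≤
      moreauEnvelope g lam x + inner ℝ (lam • (x - q)) (y - x) + lam / 2 * ‖y - x‖ ^ 2 := by
  rw [moreauEnvelope_eq_of_isMinOn hq, moreauEnvelope_eq_of_isMinOn hp, real_inner_smul_left]
  have hpq : g p + lam / 2 * ‖p - y‖ ^ 2 ≤ g q + lam / 2 * ‖q - y‖ ^ 2 := hp (mem_univ q)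
  have hexpand : ‖q - y‖ ^ 2 = ‖q - x‖ ^ 2 + 2 * inner ℝ (x - q) (y - x) + ‖y - x‖ ^ 2 := by
    rw [show q - y = (q - x) - (y - x) by abel, norm_sub_sq_real, ← neg_sub x q, inner_neg_left]
    ring
  linear_combination hpq + lam / 2 * hexpand

lemma moreauEnvelope_add_inner_le (hg : ConvexOn ℝ univ g) (hlam : 0 ≤ lam)
    (hq : IsMinOn (fun v => g v + lam / 2 * ‖v - x‖ ^ 2) univ q)
    (hp : IsMinOn (fun v => g v + lam / 2 * ‖v - y‖ ^ 2) univ p) :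
    moreauEnvelope g lam x + inner ℝ (lam • (x - q)) (y - x) ≤ moreauEnvelope g lam y := by
  rw [moreauEnvelope_eq_of_isMinOn hq, moreauEnvelope_eq_of_isMinOn hp, real_inner_smul_left]
  have hgrowth := (hg.strongConvexOn_add_sq_norm_sub lam x).add_sq_norm_sub_le_of_isMinOn hq
    (mem_univ q) (mem_univ p)
  have hexpand : ‖p - q‖ ^ 2 + ‖p - y‖ ^ 2 - ‖p - x‖ ^ 2 - 2 * inner ℝ (x - q) (y - x)
      = ‖(p - q) - (y - x)‖ ^ 2 := by
    simp only [← real_inner_self_eq_norm_sq, inner_sub_left, inner_sub_right, real_inner_comm x q,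
      real_inner_comm y q, real_inner_comm y x, real_inner_comm p q, real_inner_comm p x,
      real_inner_comm p y]
    ring
  nlinarith [mul_nonneg hlam (sq_nonneg ‖(p - q) - (y - x)‖)]

end MoreauEnvelope

/-- **Moreau envelope: proximal map and gradient.**
Let `E` be a finite-dimensional real inner product space, `g : E → ℝ` convex and
continuous, and `λ > 0`.  Then for every `x` the function
`u ↦ g u + (λ/2)‖u - x‖²` attains its infimum at a unique point `prox x`, and the
Moreau envelope `g̃^λ(y) = ⨅ u, g u + (λ/2)‖u - y‖²` has gradient
`λ • (x - prox x)` at every `x`. -/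
theorem moreau_envelope_prox_and_gradient
    {E : Type*} [NormedAddCommGroup E] [InnerProductSpace ℝ E] [FiniteDimensional ℝ E]
    (g : E → ℝ) (hconv : ConvexOn ℝ Set.univ g) (hcont : Continuous g)
    (lam : ℝ) (hlam : 0 < lam) :
    ∃ prox : E → E,
      (∀ x u : E,
        IsMinOn (fun v : E => g v + lam / 2 * ‖v - x‖ ^ 2) Set.univ u ↔ u = prox x) ∧
      ∀ x : E,
        HasGradientAt (fun y : E => ⨅ u : E, (g u + lam / 2 * ‖u - y‖ ^ 2))
          (lam • (x - prox x)) x := by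
  have hstrong (x : E) : StrongConvexOn univ lam fun v => g v + lam / 2 * ‖v - x‖ ^ 2 :=
    hconv.strongConvexOn_add_sq_norm_sub lam x
  choose prox hprox using fun x => (hstrong x).exists_isMinOn hlam (by fun_prop)
  refine ⟨prox, fun x u => ⟨fun hu => ?_, fun h => h ▸ hprox x⟩, fun x => ?_⟩
  · exact ((hstrong x).strictConvexOn hlam).eq_of_isMinOn hu (hprox x) (mem_univ u) (mem_univ _)
  · refine hasGradientAt_of_abs_sub_inner_le_sq (f := moreauEnvelope g lam) (C := lam / 2)
      fun y => abs_le.2 ⟨?_, ?_⟩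
    · have hsq : 0 ≤ lam / 2 * ‖y - x‖ ^ 2 := by positivity
      linarith [moreauEnvelope_add_inner_le hconv hlam.le (hprox x) (hprox y)]
    · linarith [moreauEnvelope_le_add_inner_add_sq (hprox x) (hprox y)]
end

section
/- Let E be a finite-dimensional real inner product space, let λ > 0 and μ > 0, and let g : E → ℝ be continuous and μ-strongly convex. Then the Moreau envelope g̃^λ is (μλ/(μ+λ))-strongly convex. -/
/-!
Writing `h := g - μ/2 ‖·‖²` (convex) and completing the square in `u`,
`g u + λ/2 ‖u - x‖² = h u + (μ+λ)/2 ‖u - (λ/(μ+λ)) x‖² + μλ/(μ+λ)/2 ‖x‖²`.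
So the envelope minus `μλ/(μ+λ)/2 ‖x‖²` is the infimum over `u` of a function jointly convex in
`(u, x)`, hence convex. The infimum is finite because a convex function continuous at a point has an
affine minorant in `‖u‖`, which the quadratic term dominates.
-/

open Set

theorem ConvexOn.ciInf_uncurry {E F : Type*} [AddCommGroup E] [Module ℝ E] [AddCommGroup F]
    [Module ℝ F] {Φ : E → F → ℝ} (hΦ : ConvexOn ℝ univ (Function.uncurry Φ))
    (hbdd : ∀ x, BddBelow (range fun u => Φ u x)) :
    ConvexOn ℝ univ fun x => ⨅ u, Φ u x := by
  refine ⟨convex_univ, fun x _ y _ a b ha hb hab => le_of_forall_pos_le_add fun ε hε => ?_⟩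
  obtain ⟨u, hu⟩ := exists_lt_of_ciInf_lt (lt_add_of_pos_right (⨅ u, Φ u x) hε)
  obtain ⟨v, hv⟩ := exists_lt_of_ciInf_lt (lt_add_of_pos_right (⨅ u, Φ u y) hε)
  calc ⨅ w, Φ w (a • x + b • y) ≤ Φ (a • u + b • v) (a • x + b • y) := ciInf_le (hbdd _) _
    _ ≤ a * Φ u x + b * Φ v y := hΦ.2 (mem_univ (u, x)) (mem_univ (v, y)) ha hb hab
    _ ≤ a * ((⨅ u, Φ u x) + ε) + b * ((⨅ u, Φ u y) + ε) := by gcongr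
    _ = a • (⨅ u, Φ u x) + b • (⨅ u, Φ u y) + ε := by
      simp only [smul_eq_mul]; linear_combination ε * hab

section NormedSpace

variable {E : Type*} [NormedAddCommGroup E] [NormedSpace ℝ E]

theorem ConvexOn.sub_norm_div_le {h : E → ℝ} (hh : ConvexOn ℝ univ h) {r : ℝ} (hr : 0 < r)
    (hup : ∀ z, ‖z‖ ≤ r → h z ≤ h 0 + 1) (u : E) : h 0 - ‖u‖ / r ≤ h u := by
  rcases eq_or_ne u 0 with rfl | hu
  · simp
  have hn : 0 < ‖u‖ := norm_pos_iff.2 hu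
  set w : E := -(r / ‖u‖) • u
  have hw : h w ≤ h 0 + 1 := hup w (by simp [w, norm_smul, abs_of_pos hr, hn.ne'])
  -- `0` lies on the segment from `u` to the point `w` of norm `r` opposite to it
  have hzero : (r / (r + ‖u‖)) • u + (‖u‖ / (r + ‖u‖)) • w = 0 := by
    simp only [w, smul_smul, neg_smul, smul_neg, ← sub_eq_add_neg, ← sub_smul]
    field_simp
    simp
  have hconv := hh.2 (mem_univ u) (mem_univ w)
    (show 0 ≤ r / (r + ‖u‖) by positivity) (show 0 ≤ ‖u‖ / (r + ‖u‖) by positivity)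
    (by field_simp)
  rw [hzero, smul_eq_mul, smul_eq_mul, div_mul_eq_mul_div, div_mul_eq_mul_div, ← add_div,
    le_div_iff₀ (by positivity)] at hconv
  rw [sub_le_comm, le_div_iff₀ hr]
  nlinarith

theorem ConvexOn.exists_forall_sub_mul_norm_le {h : E → ℝ} (hh : ConvexOn ℝ univ h)
    (hc : ContinuousAt h 0) : ∃ a b : ℝ, ∀ u, a - b * ‖u‖ ≤ h u := by
  obtain ⟨δ, hδ, hball⟩ := Metric.continuousAt_iff.1 hc 1 one_pos
  refine ⟨h 0, 2 / δ, fun u => ?_⟩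
  have hup : ∀ z : E, ‖z‖ ≤ δ / 2 → h z ≤ h 0 + 1 := fun z hz => by
    have := hball (x := z) (by rw [dist_zero_right]; linarith)
    rw [Real.dist_eq, abs_lt] at this
    linarith
  calc h 0 - 2 / δ * ‖u‖ = h 0 - ‖u‖ / (δ / 2) := by ring
    _ ≤ h u := hh.sub_norm_div_le (half_pos hδ) hup u

end NormedSpace

theorem bddBelow_range_add_mul_norm_sub_sq {E : Type*} [SeminormedAddCommGroup E] {h : E → ℝ}
    {a b κ : ℝ} (hκ : 0 < κ) (hlow : ∀ u, a - b * ‖u‖ ≤ h u) (y : E) :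
    BddBelow (range fun u => h u + κ / 2 * ‖u - y‖ ^ 2) := by
  refine ⟨a - |b| * ‖y‖ - b ^ 2 / (2 * κ), ?_⟩
  rintro _ ⟨u, rfl⟩
  have htri : ‖u‖ ≤ ‖u - y‖ + ‖y‖ := norm_le_norm_sub_add u y
  have hsq : 0 ≤ κ / 2 * ‖u - y‖ ^ 2 - |b| * ‖u - y‖ + b ^ 2 / (2 * κ) := by
    have : κ / 2 * ‖u - y‖ ^ 2 - |b| * ‖u - y‖ + b ^ 2 / (2 * κ)
        = (κ * ‖u - y‖ - |b|) ^ 2 / (2 * κ) := by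
      rw [← sq_abs b]; field_simp; ring
    rw [this]; positivity
  dsimp only
  nlinarith [hlow u, mul_le_mul_of_nonneg_left htri (abs_nonneg b),
    mul_nonneg (sub_nonneg.2 (le_abs_self b)) (norm_nonneg u)]

theorem half_mul_norm_sq_add_half_mul_norm_sub_sq {E : Type*} [NormedAddCommGroup E]
    [InnerProductSpace ℝ E] {μ lam : ℝ} (h : μ + lam ≠ 0) (u x : E) :
    μ / 2 * ‖u‖ ^ 2 + lam / 2 * ‖u - x‖ ^ 2
      = (μ + lam) / 2 * ‖u - (lam / (μ + lam)) • x‖ ^ 2 + μ * lam / (μ + lam) / 2 * ‖x‖ ^ 2 := by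
  rw [norm_sub_sq_real, norm_sub_sq_real, norm_smul, real_inner_smul_right, mul_pow,
    Real.norm_eq_abs, sq_abs]
  field_simp
  ring

theorem moreau_envelope_strongly_convex_general
    {E : Type*} [NormedAddCommGroup E] [InnerProductSpace ℝ E]
    (g : E → ℝ) (lam μ : ℝ) (hlam : 0 < lam) (hμ : 0 < μ)
    (hcont : Continuous g)
    (hsc : ConvexOn ℝ Set.univ (fun x : E => g x - μ / 2 * ‖x‖ ^ 2)) :
    ConvexOn ℝ Set.univ (fun x : E =>
      (⨅ u : E, (g u + lam / 2 * ‖u - x‖ ^ 2)) - (μ * lam / (μ + lam)) / 2 * ‖x‖ ^ 2) := by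
  set h : E → ℝ := fun x => g x - μ / 2 * ‖x‖ ^ 2
  have hκ : 0 < μ + lam := by positivity
  set Φ : E → E → ℝ := fun u x => h u + (μ + lam) / 2 * ‖u - (lam / (μ + lam)) • x‖ ^ 2
  obtain ⟨a, b, hlow⟩ := hsc.exists_forall_sub_mul_norm_le (by fun_prop)
  have hbdd (x : E) : BddBelow (range fun u => Φ u x) :=
    bddBelow_range_add_mul_norm_sub_sq hκ hlow _
  have hΦ : ConvexOn ℝ univ (Function.uncurry Φ) :=
    (hsc.comp_linearMap (LinearMap.fst ℝ E E)).add
      (((convexOn_univ_norm.pow (fun _ _ => norm_nonneg _) 2).comp_linearMap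
        (LinearMap.fst ℝ E E - (lam / (μ + lam)) • LinearMap.snd ℝ E E)).smul (by positivity))
  have henv (x : E) : (⨅ u, (g u + lam / 2 * ‖u - x‖ ^ 2)) - μ * lam / (μ + lam) / 2 * ‖x‖ ^ 2
      = ⨅ u, Φ u x := by
    rw [sub_eq_iff_eq_add, ← OrderIso.addRight_apply, (OrderIso.addRight _).map_ciInf (hbdd x)]
    congr 1 with u
    simp only [OrderIso.addRight_apply, Φ, h]
    linear_combination half_mul_norm_sq_add_half_mul_norm_sub_sq hκ.ne' u x
  simpa only [henv] using hΦ.ciInf_uncurry hbdd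

/-- **Moreau envelope of a strongly convex function is strongly convex.**
Let `E` be a finite-dimensional real inner product space, `λ > 0`, `μ > 0`, and let
`g : E → ℝ` be continuous and `μ`-strongly convex (i.e. `x ↦ g x − (μ/2)‖x‖²` is
convex).  Then the Moreau envelope `g̃^λ` is `(μλ/(μ+λ))`-strongly convex. -/
theorem moreau_envelope_strongly_convex
    {E : Type*} [NormedAddCommGroup E] [InnerProductSpace ℝ E] [FiniteDimensional ℝ E]
    (g : E → ℝ) (lam μ : ℝ) (hlam : 0 < lam) (hμ : 0 < μ)
    (hcont : Continuous g)
    (hsc : ConvexOn ℝ Set.univ (fun x : E => g x - μ / 2 * ‖x‖ ^ 2)) :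
    ConvexOn ℝ Set.univ (fun x : E =>
      (⨅ u : E, (g u + lam / 2 * ‖u - x‖ ^ 2)) - (μ * lam / (μ + lam)) / 2 * ‖x‖ ^ 2) :=
  moreau_envelope_strongly_convex_general g lam μ hlam hμ hcont hsc
end

section
/- Let E be a finite-dimensional real inner product space and let g : E → ℝ be convex, differentiable, and L_g-smooth (L_g > 0). Then for all x, y ∈ E: ‖∇g(x) − ∇g(y)‖² ≤ 2 L_g ( g(x) − g(y) − ⟨∇g(y), x − y⟩ ). -/
/-!
The convex function `g - ⟪∇g y, ·⟫` is minimal at `y`, so it cannot drop below its value at `y`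
after the gradient step `z = x - L⁻¹ (∇g x - ∇g y)` from `x`. Concretely: apply the descent lemma
at `x` towards `z`, and the first-order convexity inequality at `y` towards `z`.
Adding the two, the linear terms combine into `‖∇g x - ∇g y‖² / L` and the quadratic term of the
descent lemma takes back half of it.
-/

open scoped RealInnerProductSpace
open Set

section

variable {E : Type*} [NormedAddCommGroup E] [InnerProductSpace ℝ E] [CompleteSpace E] {f : E → ℝ}

theorem HasGradientAt.hasDerivAt_comp_add_smul {f' x d : E} {t : ℝ}
    (h : HasGradientAt f f' (x + t • d)) :
    HasDerivAt (fun s : ℝ => f (x + s • d)) ⟪f', d⟫ t := by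
  have hline : HasDerivAt (fun s : ℝ => x + s • d) d t := by
    simpa using ((hasDerivAt_id t).smul_const d).const_add x
  have := h.hasFDerivAt.comp_hasDerivAt t hline
  rwa [InnerProductSpace.toDual_apply_apply] at this

theorem ConvexOn.inner_gradient_le_sub {s : Set E} (hf : ConvexOn ℝ s f) {x y : E}
    (hx : x ∈ s) (hy : y ∈ s) (hfx : DifferentiableAt ℝ f x) :
    ⟪gradient f x, y - x⟫ ≤ f y - f x := by
  have hline : ConvexOn ℝ (AffineMap.lineMap x y ⁻¹' s) fun t : ℝ => f (x + t • (y - x)) := by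
    refine (hf.comp_affineMap (AffineMap.lineMap x y)).congr fun t _ => ?_
    simp [AffineMap.lineMap_apply, add_comm]
  have hderiv : HasDerivAt (fun t : ℝ => f (x + t • (y - x))) ⟪gradient f x, y - x⟫ 0 :=
    HasGradientAt.hasDerivAt_comp_add_smul (by simpa using hfx.hasGradientAt)
  simpa [slope_def_field] using
    hline.le_slope_of_hasDerivAt (by simpa using hx) (by simpa using hy) zero_lt_one hderiv

theorem Differentiable.le_add_inner_gradient_add_mul_sq_norm (hf : Differentiable ℝ f) {L : ℝ}
    (hL : ∀ x y, ‖gradient f x - gradient f y‖ ≤ L * ‖x - y‖) (x y : E) :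
    f y ≤ f x + ⟪gradient f x, y - x⟫ + L / 2 * ‖y - x‖ ^ 2 := by
  set d := y - x
  set φ : ℝ → ℝ := fun t => f (x + t • d) - t * ⟪gradient f x, d⟫ - L / 2 * t ^ 2 * ‖d‖ ^ 2
  have hφ : ∀ t, HasDerivAt φ (⟪gradient f (x + t • d) - gradient f x, d⟫ - L * t * ‖d‖ ^ 2) t := by
    intro t
    refine ((((hf (x + t • d)).hasGradientAt.hasDerivAt_comp_add_smul).sub
      ((hasDerivAt_id t).mul_const ⟪gradient f x, d⟫)).sub
      (((hasDerivAt_pow 2 t).const_mul (L / 2)).mul_const (‖d‖ ^ 2))).congr_deriv ?_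
    rw [inner_sub_left]
    push_cast
    ring
  have hanti : AntitoneOn φ (Ici 0) := by
    refine antitoneOn_of_hasDerivWithinAt_nonpos (convex_Ici 0)
      (fun t _ => (hφ t).continuousAt.continuousWithinAt) (fun t _ => (hφ t).hasDerivWithinAt) ?_
    intro t ht
    rw [interior_Ici] at ht
    calc ⟪gradient f (x + t • d) - gradient f x, d⟫ - L * t * ‖d‖ ^ 2
        ≤ ‖gradient f (x + t • d) - gradient f x‖ * ‖d‖ - L * t * ‖d‖ ^ 2 := by
          gcongr; exact real_inner_le_norm _ _
      _ ≤ L * ‖t • d‖ * ‖d‖ - L * t * ‖d‖ ^ 2 := by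
          gcongr; simpa using hL (x + t • d) x
      _ = 0 := by rw [norm_smul, Real.norm_of_nonneg ht.le]; ring
  have := hanti self_mem_Ici (mem_Ici.2 zero_le_one) zero_le_one
  simp only [φ, d, zero_smul, one_smul, add_zero, add_sub_cancel] at this
  linarith

end

/-- **Cocoercivity-type inequality for convex `L`-smooth functions.**
Let `E` be a finite-dimensional real inner product space and `g : E → ℝ` convex,
differentiable, and `L_g`-smooth (`L_g > 0`).  Then for all `x, y`:
`‖∇g(x) − ∇g(y)‖² ≤ 2 L_g (g(x) − g(y) − ⟪∇g(y), x − y⟫)`. -/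
theorem convex_smooth_grad_sq_le
    {E : Type*} [NormedAddCommGroup E] [InnerProductSpace ℝ E] [FiniteDimensional ℝ E]
    (g : E → ℝ) (Lg : ℝ) (hLg : 0 < Lg)
    (hconv : ConvexOn ℝ Set.univ g) (hdiff : Differentiable ℝ g)
    (hsmooth : ∀ x y : E, ‖gradient g x - gradient g y‖ ≤ Lg * ‖x - y‖) :
    ∀ x y : E,
      ‖gradient g x - gradient g y‖ ^ 2
        ≤ 2 * Lg * (g x - g y - ⟪gradient g y, x - y⟫) := by
  intro x y
  set w := gradient g x - gradient g y
  set z := x - Lg⁻¹ • w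
  have hdescent := hdiff.le_add_inner_gradient_add_mul_sq_norm hsmooth x z
  have hconvex := hconv.inner_gradient_le_sub (mem_univ y) (mem_univ z) (hdiff y)
  rw [show z - x = -Lg⁻¹ • w by simp [z], inner_smul_right, norm_smul, Real.norm_eq_abs,
    abs_neg, abs_of_pos (inv_pos.2 hLg)] at hdescent
  rw [show z - y = (x - y) - Lg⁻¹ • w by simp [z]; abel, inner_sub_right,
    inner_smul_right] at hconvex
  have hw : ⟪gradient g x, w⟫ - ⟪gradient g y, w⟫ = ‖w‖ ^ 2 := by
    rw [← inner_sub_left, real_inner_self_eq_norm_sq]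
  calc ‖w‖ ^ 2
      = 2 * Lg * (Lg⁻¹ * (⟪gradient g x, w⟫ - ⟪gradient g y, w⟫) - Lg / 2 * (Lg⁻¹ * ‖w‖) ^ 2) := by
        rw [hw]; field_simp; ring
    _ ≤ 2 * Lg * (g x - g y - ⟪gradient g y, x - y⟫) := by
        gcongr 2 * Lg * ?_; linarith
end

section
/- Let E be a finite-dimensional real inner product space and let φ : E → ℝ be differentiable, μ-strongly convex (μ > 0), and L-smooth (L > 0), with global minimizer x*. Let 0 < β ≤ 1/(2L), let g ∈ E be arbitrary, and set x⁺ = x − βg for some x ∈ E. Then ‖x⁺ − x*‖² ≤ (1 − βμ/2) ‖x − x*‖² + 2β(β + 1/μ) ‖g − ∇φ(x)‖². -/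
/-!
Split `x⁺ - x⋆ = (x - β∇φ(x) - x⋆) - β(g - ∇φ(x))`. Strong convexity gives
`⟪∇φ(x), x - x⋆⟫ ≥ φ(x) - φ(x⋆) + μ/2 ‖x - x⋆‖²`, and a descent step of length `1/(2L)` from `x`
together with the minimality of `x⋆` gives `‖∇φ(x)‖² ≤ 4L (φ(x) - φ(x⋆))`; for `β ≤ 1/(2L)` these
make the exact step contract, `‖x - β∇φ(x) - x⋆‖² ≤ (1 - βμ)‖x - x⋆‖²`. The descent lemma from the
mean value inequality, with constant `L` instead of `L/2`, is enough for this. The gradient error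
is then added through `‖a - b‖² ≤ (1 + ε)‖a‖² + (1 + ε⁻¹)‖b‖²` with `ε = βμ/2`.
-/

open Set InnerProductSpace

theorem ConvexOn.add_le_of_hasFDerivAt {E : Type*} [NormedAddCommGroup E] [NormedSpace ℝ E]
    {s : Set E} {f : E → ℝ} {f' : E →L[ℝ] ℝ} {x y : E} (hf : ConvexOn ℝ s f)
    (hx : x ∈ s) (hy : y ∈ s) (hf' : HasFDerivAt f f' x) :
    f x + f' (y - x) ≤ f y := by
  let ℓ : ℝ →ᵃ[ℝ] E := AffineMap.lineMap x y
  have hderiv : HasDerivAt (f ∘ ℓ) (f' (y - x)) 0 :=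
    hf'.comp_hasDerivAt_of_eq 0 AffineMap.hasDerivAt_lineMap (by simp [ℓ])
  have hslope := (hf.comp_affineMap ℓ).le_slope_of_hasDerivAt
    (by simpa [ℓ] using hx) (by simpa [ℓ] using hy) one_pos hderiv
  simp only [slope_def_field, Function.comp_apply, ℓ, AffineMap.lineMap_apply_zero,
    AffineMap.lineMap_apply_one, sub_zero, div_one] at hslope
  linarith

theorem norm_sub_sq_le_one_add_mul {E : Type*} [SeminormedAddCommGroup E] (a b : E) {ε : ℝ}
    (hε : 0 < ε) :
    ‖a - b‖ ^ 2 ≤ (1 + ε) * ‖a‖ ^ 2 + (1 + ε⁻¹) * ‖b‖ ^ 2 :=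
  calc ‖a - b‖ ^ 2
    _ ≤ (‖a‖ + ‖b‖) ^ 2 := by gcongr; exact norm_sub_le a b
    _ = ‖a‖ ^ 2 + ‖b‖ ^ 2 + 2 * ‖a‖ * ‖b‖ := by ring
    _ ≤ ‖a‖ ^ 2 + ‖b‖ ^ 2 + (ε * ‖a‖ ^ 2 + ε⁻¹ * ‖b‖ ^ 2) := by
      gcongr; exact two_mul_le_add_mul_sq hε
    _ = (1 + ε) * ‖a‖ ^ 2 + (1 + ε⁻¹) * ‖b‖ ^ 2 := by ring

section InnerProductSpace

variable {E : Type*} [NormedAddCommGroup E] [InnerProductSpace ℝ E] [CompleteSpace E]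
  {f : E → ℝ} {L : ℝ}

theorem StrongConvexOn.add_inner_add_le_of_hasGradientAt {s : Set E} {m : ℝ}
    {f' x y : E} (hf : StrongConvexOn s m f) (hx : x ∈ s) (hy : y ∈ s)
    (hf' : HasGradientAt f f' x) :
    f x + ⟪f', y - x⟫_ℝ + m / 2 * ‖y - x‖ ^ 2 ≤ f y := by
  have hψ : HasFDerivAt (fun z => f z - m / 2 * ‖z‖ ^ 2)
      (toDual ℝ E f' - (m / 2) • (2 • innerSL ℝ x)) x :=
    hf'.hasFDerivAt.sub ((hasStrictFDerivAt_norm_sq x).hasFDerivAt.const_mul (m / 2))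
  have key := (strongConvexOn_iff_convex.mp hf).add_le_of_hasFDerivAt hx hy hψ
  simp only [sub_apply, smul_apply, toDual_apply_apply, innerSL_apply_apply, smul_eq_mul,
    nsmul_eq_mul, inner_sub_right, real_inner_self_eq_norm_sq] at key
  rw [norm_sub_sq_real, inner_sub_right, real_inner_comm x y]
  push_cast at key
  linarith

theorem le_add_inner_add_of_lipschitz_gradient (hL : 0 ≤ L)
    (hf : Differentiable ℝ f) (hsmooth : ∀ a b, ‖gradient f a - gradient f b‖ ≤ L * ‖a - b‖)
    (x y : E) :
    f y ≤ f x + ⟪gradient f x, y - x⟫_ℝ + L * ‖y - x‖ ^ 2 := by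
  have hbound : ∀ z ∈ segment ℝ x y,
      ‖fderiv ℝ f z - toDual ℝ E (gradient f x)‖ ≤ L * ‖y - x‖ := by
    intro z hz
    rw [← toDual_gradient, ← map_sub, LinearIsometryEquiv.norm_map]
    exact (hsmooth z x).trans (mul_le_mul_of_nonneg_left (norm_sub_le_of_mem_segment hz) hL)
  have key := (convex_segment x y).norm_image_sub_le_of_norm_fderiv_le' (fun z _ => hf z) hbound
    (left_mem_segment ℝ x y) (right_mem_segment ℝ x y)
  rw [toDual_apply_apply, Real.norm_eq_abs] at key
  nlinarith [le_abs_self (f y - f x - ⟪gradient f x, y - x⟫_ℝ)]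

theorem norm_gradient_sq_le_of_isMinOn (hL : 0 < L)
    (hf : Differentiable ℝ f) (hsmooth : ∀ a b, ‖gradient f a - gradient f b‖ ≤ L * ‖a - b‖)
    {xstar : E} (hxstar : IsMinOn f univ xstar) (x : E) :
    ‖gradient f x‖ ^ 2 ≤ 4 * L * (f x - f xstar) := by
  set G := gradient f x
  have hdescent := le_add_inner_add_of_lipschitz_gradient hL.le hf hsmooth x
    (x - (2 * L)⁻¹ • G)
  have hmin : f xstar ≤ f (x - (2 * L)⁻¹ • G) := hxstar (mem_univ _)
  rw [sub_sub_cancel_left, inner_neg_right, real_inner_smul_right, real_inner_self_eq_norm_sq,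
    norm_neg, norm_smul, Real.norm_of_nonneg (by positivity)] at hdescent
  have hcoef : (2 * L)⁻¹ * ‖G‖ ^ 2 - L * ((2 * L)⁻¹ * ‖G‖) ^ 2 = ‖G‖ ^ 2 / (4 * L) := by
    field_simp; ring
  have hquarter : ‖G‖ ^ 2 / (4 * L) ≤ f x - f xstar := by linarith
  rwa [div_le_iff₀ (by positivity), mul_comm] at hquarter

theorem norm_sub_smul_gradient_sub_sq_le {μ : ℝ} (hsc : StrongConvexOn univ μ f) (hL : 0 < L)
    (hf : Differentiable ℝ f) (hsmooth : ∀ a b, ‖gradient f a - gradient f b‖ ≤ L * ‖a - b‖)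
    {xstar : E} (hxstar : IsMinOn f univ xstar) {β : ℝ} (hβ0 : 0 ≤ β) (hβ : β ≤ 1 / (2 * L))
    (x : E) :
    ‖x - β • gradient f x - xstar‖ ^ 2 ≤ (1 - β * μ) * ‖x - xstar‖ ^ 2 := by
  have hstrong := hsc.add_inner_add_le_of_hasGradientAt (mem_univ x) (mem_univ xstar)
    (hf x).hasGradientAt
  have hgrad := norm_gradient_sq_le_of_isMinOn hL hf hsmooth hxstar x
  have hgap : 0 ≤ f x - f xstar := sub_nonneg.mpr (hxstar (mem_univ x))
  have hβL : 4 * L * β ^ 2 ≤ 2 * β := by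
    rw [le_div_iff₀ (by positivity)] at hβ; nlinarith
  have hexpand : ‖x - β • gradient f x - xstar‖ ^ 2 = ‖x - xstar‖ ^ 2
      - 2 * β * ⟪gradient f x, x - xstar⟫_ℝ + β ^ 2 * ‖gradient f x‖ ^ 2 := by
    rw [sub_right_comm, norm_sub_sq_real, real_inner_smul_right, norm_smul,
      Real.norm_of_nonneg hβ0, real_inner_comm]
    ring
  rw [← neg_sub x xstar, inner_neg_right, norm_neg] at hstrong
  rw [hexpand]
  nlinarith [mul_le_mul_of_nonneg_left hgrad (sq_nonneg β), mul_le_mul_of_nonneg_right hβL hgap]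

end InnerProductSpace

/-- **One-step contraction for inexact gradient descent (strongly convex case).**
Let `φ : E → ℝ` be differentiable, `μ`-strongly convex and `L`-smooth with global
minimizer `x*`.  For `0 < β ≤ 1/(2L)`, an arbitrary `g ∈ E`, and `x⁺ = x − βg`:
`‖x⁺ − x*‖² ≤ (1 − βμ/2)‖x − x*‖² + 2β(β + 1/μ)‖g − ∇φ(x)‖²`. -/
theorem inexact_gd_one_step_contraction
    {E : Type*} [NormedAddCommGroup E] [InnerProductSpace ℝ E] [FiniteDimensional ℝ E]
    (φ : E → ℝ) (μ L : ℝ) (hμ : 0 < μ) (hL : 0 < L)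
    (hdiff : Differentiable ℝ φ)
    (hsc : ConvexOn ℝ Set.univ (fun x : E => φ x - μ / 2 * ‖x‖ ^ 2))
    (hsmooth : ∀ a b : E, ‖gradient φ a - gradient φ b‖ ≤ L * ‖a - b‖)
    (xstar : E) (hxstar : IsMinOn φ Set.univ xstar)
    (β : ℝ) (hβ0 : 0 < β) (hβ : β ≤ 1 / (2 * L))
    (x g : E) :
    ‖(x - β • g) - xstar‖ ^ 2
      ≤ (1 - β * μ / 2) * ‖x - xstar‖ ^ 2
        + 2 * β * (β + 1 / μ) * ‖g - gradient φ x‖ ^ 2 := by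
  have hεpos : 0 < β * μ / 2 := by positivity
  have hexact := norm_sub_smul_gradient_sub_sq_le (strongConvexOn_iff_convex.mpr hsc) hL hdiff
    hsmooth hxstar hβ0.le hβ x
  have hsplit : x - β • g - xstar = (x - β • gradient φ x - xstar) - β • (g - gradient φ x) := by
    rw [smul_sub]; abel
  have hcontract : (1 + β * μ / 2) * (1 - β * μ) ≤ 1 - β * μ / 2 := by nlinarith
  have hnoise : (1 + (β * μ / 2)⁻¹) * β ^ 2 ≤ 2 * β * (β + 1 / μ) := by
    field_simp; nlinarith
  calc ‖x - β • g - xstar‖ ^ 2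
    _ ≤ (1 + β * μ / 2) * ‖x - β • gradient φ x - xstar‖ ^ 2
        + (1 + (β * μ / 2)⁻¹) * ‖β • (g - gradient φ x)‖ ^ 2 :=
      hsplit ▸ norm_sub_sq_le_one_add_mul _ _ hεpos
    _ ≤ (1 + β * μ / 2) * ((1 - β * μ) * ‖x - xstar‖ ^ 2)
        + (1 + (β * μ / 2)⁻¹) * β ^ 2 * ‖g - gradient φ x‖ ^ 2 := by
      rw [norm_smul, Real.norm_of_nonneg hβ0.le, mul_pow, ← mul_assoc]
      gcongr
    _ ≤ (1 - β * μ / 2) * ‖x - xstar‖ ^ 2 + 2 * β * (β + 1 / μ) * ‖g - gradient φ x‖ ^ 2 := by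
      rw [← mul_assoc]
      gcongr
end

section
/- (Client-level convergence, strongly convex case.) Let E be a finite-dimensional real inner product space, let f : E → ℝ be differentiable, μ_f-strongly convex (μ_f > 0), and L_f-smooth, let λ > 0, w ∈ E, and 0 < α ≤ 1/(L_f + λ). Define θ⁰ = w and θ^{l+1} = θ^l − α ( ∇f(θ^l) + λ(θ^l − w) ) for l ∈ ℕ. Then for every L ∈ ℕ: ‖θ^L − prox_{f/λ}(w)‖² ≤ (1 − α(μ_f + λ))^L ‖w − prox_{f/λ}(w)‖². -/
/-!
The objective `g θ = f θ + λ/2 ‖θ - w‖²` lies between two quadratics around every point: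
the `(μ_f + λ)`-strong convexity of `g` bounds it from below and the descent lemma for its
`(L_f + λ)`-Lipschitz gradient bounds it from above. Comparing `g` at its minimiser `p` with `g`
one gradient step after `θ` shows that the step contracts `‖θ - p‖²` by `1 - α (μ_f + λ)`.
-/

open Set
open scoped RealInnerProductSpace Gradient

section NormedSpace

variable {F : Type*} [NormedAddCommGroup F] [NormedSpace ℝ F]
  {h : F → ℝ} {h' : F →L[ℝ] ℝ}

theorem HasFDerivAt.hasDerivAt_comp_add_smul {x v : F} {t : ℝ}
    (hd : HasFDerivAt h h' (x + t • v)) :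
    HasDerivAt (fun s : ℝ => h (x + s • v)) (h' v) t := by
  have hline : HasDerivAt (fun s : ℝ => x + s • v) v t := by
    simpa using ((hasDerivAt_id t).smul_const v).const_add x
  exact hd.comp_hasDerivAt t hline

theorem ConvexOn.add_fderiv_sub_le (hc : ConvexOn ℝ univ h) {x : F} (hd : HasFDerivAt h h' x)
    (y : F) : h x + h' (y - x) ≤ h y := by
  have hline : ConvexOn ℝ univ fun t : ℝ => h (x + t • (y - x)) := by
    simpa [Function.comp_def, AffineMap.lineMap_apply, add_comm] using
      hc.comp_affineMap (AffineMap.lineMap x y : ℝ →ᵃ[ℝ] F)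
  have hslope := hline.le_slope_of_hasDerivAt (mem_univ 0) (mem_univ 1) one_pos
    (HasFDerivAt.hasDerivAt_comp_add_smul (by simpa using hd))
  simp only [slope_def_field, one_smul, zero_smul, add_zero, add_sub_cancel, sub_zero,
    div_one] at hslope
  linarith

end NormedSpace

section InnerProductSpace

variable {E : Type*} [NormedAddCommGroup E] [InnerProductSpace ℝ E]

theorem half_mul_norm_sub_sq_eq (c : ℝ) (w x y : E) :
    c / 2 * ‖y - w‖ ^ 2
      = c / 2 * ‖x - w‖ ^ 2 + ⟪c • (x - w), y - x⟫ + c / 2 * ‖y - x‖ ^ 2 := by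
  have h := norm_add_sq_real (x - w) (y - x)
  rw [sub_add_sub_cancel'] at h
  rw [real_inner_smul_left, h]
  ring

theorem sq_norm_sub_smul_sub_le_of_isMinOn {g : E → ℝ} {G : E → E} {m L α : ℝ} {p : E}
    (hp : IsMinOn g univ p)
    (hlower : ∀ x y, g x + ⟪G x, y - x⟫ + m / 2 * ‖y - x‖ ^ 2 ≤ g y)
    (hupper : ∀ x y, g y ≤ g x + ⟪G x, y - x⟫ + L / 2 * ‖y - x‖ ^ 2)
    (hα : 0 ≤ α) (hαL : α * L ≤ 1) (x : E) :
    ‖x - α • G x - p‖ ^ 2 ≤ (1 - α * m) * ‖x - p‖ ^ 2 := by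
  have hexpand : ‖x - α • G x - p‖ ^ 2
      = ‖x - p‖ ^ 2 - 2 * α * ⟪G x, x - p⟫ + α ^ 2 * ‖G x‖ ^ 2 := by
    rw [sub_right_comm, norm_sub_sq_real, real_inner_smul_right, real_inner_comm, norm_smul,
      Real.norm_of_nonneg hα]
    ring
  have hlow := hlower x p
  rw [← neg_sub x p, inner_neg_right, norm_neg] at hlow
  have hstep := hupper x (x - α • G x)
  rw [sub_sub_cancel_left, inner_neg_right, norm_neg, real_inner_smul_right,
    real_inner_self_eq_norm_sq, norm_smul, Real.norm_of_nonneg hα] at hstep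
  have hmin : g p ≤ g (x - α • G x) := hp (mem_univ _)
  have hcube : α * L * (α ^ 2 * ‖G x‖ ^ 2) ≤ α ^ 2 * ‖G x‖ ^ 2 :=
    mul_le_of_le_one_left (by positivity) hαL
  rw [hexpand]
  nlinarith [mul_le_mul_of_nonneg_left (hlow.trans (hmin.trans hstep)) hα]

variable [CompleteSpace E] {h : E → ℝ}

theorem StrongConvexOn.add_inner_gradient_add_sq_le {μ : ℝ} (hc : StrongConvexOn univ μ h)
    {x : E} (hd : DifferentiableAt ℝ h x) (y : E) :
    h x + ⟪∇ h x, y - x⟫ + μ / 2 * ‖y - x‖ ^ 2 ≤ h y := by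
  have hsq : HasFDerivAt (fun z : E => μ / 2 * ‖z‖ ^ 2) ((μ / 2) • 2 • innerSL ℝ x) x :=
    ((hasStrictFDerivAt_norm_sq x).hasFDerivAt).const_mul (μ / 2)
  have h1 := (strongConvexOn_iff_convex.1 hc).add_fderiv_sub_le (hd.hasFDerivAt.sub hsq) y
  have h2 := half_mul_norm_sub_sq_eq μ 0 x y
  simp only [sub_zero, real_inner_smul_left] at h2
  simp only [sub_apply, smul_apply, innerSL_apply_apply,
    ← inner_gradient_left, smul_eq_mul, nsmul_eq_mul, Nat.cast_ofNat] at h1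
  linarith

theorem le_add_inner_gradient_add_sq_of_lipschitz {L : ℝ} (hd : Differentiable ℝ h)
    (hlip : ∀ a b : E, ‖∇ h a - ∇ h b‖ ≤ L * ‖a - b‖) (x y : E) :
    h y ≤ h x + ⟪∇ h x, y - x⟫ + L / 2 * ‖y - x‖ ^ 2 := by
  set v := y - x
  have hderiv : ∀ t : ℝ, HasDerivAt (fun s : ℝ => h (x + s • v) - s * ⟪∇ h x, v⟫)
      (⟪∇ h (x + t • v) - ∇ h x, v⟫) t := fun t => by
    rw [inner_sub_left]
    exact ((hd _).hasGradientAt.hasFDerivAt.hasDerivAt_comp_add_smul).fun_sub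
      (hasDerivAt_mul_const _)
  have hbound : ∀ t : ℝ, HasDerivAt (fun s : ℝ => h x + L / 2 * ‖v‖ ^ 2 * s ^ 2)
      (L * ‖v‖ ^ 2 * t) t := fun t => by
    refine (((hasDerivAt_pow 2 t).const_mul (L / 2 * ‖v‖ ^ 2)).const_add (h x)).congr_deriv ?_
    norm_num
    ring
  have hslope : ∀ t ∈ Ico (0 : ℝ) 1, ⟪∇ h (x + t • v) - ∇ h x, v⟫ ≤ L * ‖v‖ ^ 2 * t := by
    rintro t ⟨ht, -⟩
    calc ⟪∇ h (x + t • v) - ∇ h x, v⟫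
        ≤ ‖∇ h (x + t • v) - ∇ h x‖ * ‖v‖ := real_inner_le_norm _ _
      _ ≤ L * ‖t • v‖ * ‖v‖ := by
        gcongr
        simpa using hlip (x + t • v) x
      _ = L * ‖v‖ ^ 2 * t := by rw [norm_smul, Real.norm_of_nonneg ht]; ring
  have hone := image_le_of_deriv_right_le_deriv_boundary
    (fun t _ => (hderiv t).continuousAt.continuousWithinAt)
    (fun t _ => (hderiv t).hasDerivWithinAt) (by simp)
    (fun t _ => (hbound t).continuousAt.continuousWithinAt)
    (fun t _ => (hbound t).hasDerivWithinAt) hslope (right_mem_Icc.2 zero_le_one)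
  simp only [one_smul, one_mul, one_pow, mul_one, v, add_sub_cancel] at hone
  linarith

end InnerProductSpace

theorem le_pow_mul_of_le_mul {a : ℕ → ℝ} {q : ℝ} (ha : ∀ n, 0 ≤ a n)
    (h : ∀ n, a (n + 1) ≤ q * a n) (n : ℕ) : a n ≤ q ^ n * a 0 := by
  rcases le_or_gt 0 q with hq | hq
  · exact le_geom hq n fun k _ => h k
  -- For `q < 0` the hypotheses force `a = 0`.
  have ha0 : a 0 = 0 := by nlinarith [ha 1, ha 0, h 0]
  cases n with
  | zero => simp
  | succ k =>
    rw [ha0, mul_zero]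
    nlinarith [ha k, h k]

theorem permfl_client_convergence_strongly_convex_general
    {E : Type*} [NormedAddCommGroup E] [InnerProductSpace ℝ E] [FiniteDimensional ℝ E]
    (f : E → ℝ) (μf Lf lam : ℝ)
    (hdiff : Differentiable ℝ f)
    (hsc : ConvexOn ℝ Set.univ (fun x : E => f x - μf / 2 * ‖x‖ ^ 2))
    (hsmooth : ∀ x y : E, ‖gradient f x - gradient f y‖ ≤ Lf * ‖x - y‖)
    (w : E) (α : ℝ) (hα0 : 0 < α) (hα : α ≤ 1 / (Lf + lam))
    (p : E) (hp : IsMinOn (fun u : E => f u + lam / 2 * ‖u - w‖ ^ 2) Set.univ p)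
    (θ : ℕ → E) (hθ0 : θ 0 = w)
    (hrec : ∀ l : ℕ, θ (l + 1) = θ l - α • (gradient f (θ l) + lam • (θ l - w))) :
    ∀ L : ℕ, ‖θ L - p‖ ^ 2 ≤ (1 - α * (μf + lam)) ^ L * ‖w - p‖ ^ 2 := by
  have hαL : α * (Lf + lam) ≤ 1 := by
    have hpos : 0 < Lf + lam := one_div_pos.1 (hα0.trans_le hα)
    rwa [le_div_iff₀ hpos] at hα
  have hlower x := (strongConvexOn_iff_convex.2 hsc).add_inner_gradient_add_sq_le (hdiff x)
  have hupper := le_add_inner_gradient_add_sq_of_lipschitz hdiff hsmooth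
  have hquad := half_mul_norm_sub_sq_eq lam w
  have hinner (x y : E) := inner_add_left (𝕜 := ℝ) (gradient f x) (lam • (x - w)) (y - x)
  have hcontract := sq_norm_sub_smul_sub_le_of_isMinOn hp
    (G := fun u => gradient f u + lam • (u - w)) (m := μf + lam) (L := Lf + lam)
    (fun x y => by linarith [hlower x y, hquad x y, hinner x y])
    (fun x y => by linarith [hupper x y, hquad x y, hinner x y]) hα0.le hαL
  intro L
  simpa only [hθ0] using le_pow_mul_of_le_mul (a := fun n => ‖θ n - p‖ ^ 2)
    (fun n => by positivity) (fun n => by simpa only [hrec n] using hcontract (θ n)) L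

/-- **Client-level convergence of PerMFL, strongly convex case.**
Let `f : E → ℝ` be differentiable, `μ_f`-strongly convex and `L_f`-smooth, `λ > 0`,
`w ∈ E`, `0 < α ≤ 1/(L_f + λ)`.  With `θ⁰ = w` and
`θ^{l+1} = θˡ − α(∇f(θˡ) + λ(θˡ − w))`, for every `L`:
`‖θ^L − prox_{f/λ}(w)‖² ≤ (1 − α(μ_f + λ))^L ‖w − prox_{f/λ}(w)‖²`. -/
theorem permfl_client_convergence_strongly_convex
    {E : Type*} [NormedAddCommGroup E] [InnerProductSpace ℝ E] [FiniteDimensional ℝ E]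
    (f : E → ℝ) (μf Lf lam : ℝ) (hμf : 0 < μf) (hlam : 0 < lam)
    (hdiff : Differentiable ℝ f)
    (hsc : ConvexOn ℝ Set.univ (fun x : E => f x - μf / 2 * ‖x‖ ^ 2))
    (hsmooth : ∀ x y : E, ‖gradient f x - gradient f y‖ ≤ Lf * ‖x - y‖)
    (w : E) (α : ℝ) (hα0 : 0 < α) (hα : α ≤ 1 / (Lf + lam))
    (p : E) (hp : IsMinOn (fun u : E => f u + lam / 2 * ‖u - w‖ ^ 2) Set.univ p)
    (θ : ℕ → E) (hθ0 : θ 0 = w)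
    (hrec : ∀ l : ℕ, θ (l + 1) = θ l - α • (gradient f (θ l) + lam • (θ l - w))) :
    ∀ L : ℕ, ‖θ L - p‖ ^ 2 ≤ (1 - α * (μf + lam)) ^ L * ‖w - p‖ ^ 2 :=
  permfl_client_convergence_strongly_convex_general f μf Lf lam hdiff hsc hsmooth w α hα0 hα p hp θ
    hθ0 hrec
end
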